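/- arXiv:2512.16306 — 7 statements merged into one kernel-verified Lean document; each statement's English description precedes it below -/
import Mathlib

section
/- Let δ ≥ 0, ζ ≥ ζ₀ ≥ 0 and t ≥ T > 0 be real numbers such that ζ ≤ 2t(δ+1). Then Σ_{n=2}^∞ e^{−t·n·(n+δ)}·(n+δ)^ζ ≤ (1/(2T))·(√(2π)·√(ζ₀+1)·e^{−ζ₀+1/(12(ζ₀+1))} + 1)·e^{−2t(1+δ)}·2^ζ·(1+δ)^ζ. -/
/-!
With `c = 2(1 + δ)` and `log r ≤ r - 1`, `(m + δ)^ζ ≤ c^ζ exp (ζ ((m + δ)/c - 1))`. That exponent is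
`≤ 0` when `m + δ ≤ c`, and `≤ t (m + δ - c)` otherwise because `ζ ≤ t c`; either way the term of
index `m = n + 2` is at most `e^{-tc} c^ζ e^{-2t(n+1)}`. The geometric sum `1 / (e^{2t} - 1) ≤ 1 / (2T)`
then shows that the series is already bounded by the `+ 1` part of the constant.
-/

open Real

lemma rpow_le_rpow_mul_exp {c x ζ : ℝ} (hc : 0 < c) (hx : 0 < x) (hζ : 0 ≤ ζ) :
    x ^ ζ ≤ c ^ ζ * exp (ζ * (x / c - 1)) := by
  have hxc : 0 < x / c := div_pos hx hc
  calc x ^ ζ = c ^ ζ * (x / c) ^ ζ := by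
        rw [← mul_rpow hc.le hxc.le, mul_div_cancel₀ x hc.ne']
    _ = c ^ ζ * exp (ζ * log (x / c)) := by rw [rpow_def_of_pos hxc, mul_comm (log _)]
    _ ≤ c ^ ζ * exp (ζ * (x / c - 1)) := by
        gcongr
        exact log_le_sub_one_of_pos hxc

lemma exp_neg_mul_mul_rpow_le {δ ζ t m : ℝ} (hδ : 0 ≤ δ) (hζ : 0 ≤ ζ)
    (hcond : ζ ≤ 2 * t * (δ + 1)) (hm : 2 ≤ m) :
    exp (-t * m * (m + δ)) * (m + δ) ^ ζ ≤
      exp (-2 * t * (1 + δ)) * (2 * (1 + δ)) ^ ζ * exp (-(2 * t * (m - 1))) := by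
  have ht : 0 ≤ t := by nlinarith
  have hc : 0 < 2 * (1 + δ) := by linarith
  have hexp : -t * m * (m + δ) + ζ * ((m + δ) / (2 * (1 + δ)) - 1) ≤
      -2 * t * (1 + δ) + -(2 * t * (m - 1)) := by
    rcases le_total (2 * (1 + δ)) (m + δ) with hle | hlt
    · have hr : 0 ≤ (m + δ) / (2 * (1 + δ)) - 1 := by rw [sub_nonneg, one_le_div hc]; exact hle
      have hζr : ζ * ((m + δ) / (2 * (1 + δ)) - 1) ≤ t * (m + δ - 2 * (1 + δ)) := by
        calc ζ * ((m + δ) / (2 * (1 + δ)) - 1)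
            ≤ 2 * t * (δ + 1) * ((m + δ) / (2 * (1 + δ)) - 1) := by gcongr
          _ = t * (m + δ - 2 * (1 + δ)) := by field_simp; ring
      nlinarith [mul_nonneg ht (mul_nonneg (by linarith : 0 ≤ m - 1) (by linarith : 0 ≤ m - 2 + δ))]
    · have hr : (m + δ) / (2 * (1 + δ)) - 1 ≤ 0 := by rw [sub_nonpos, div_le_one hc]; exact hlt
      nlinarith [mul_nonpos_of_nonneg_of_nonpos hζ hr,
        mul_nonneg ht (mul_nonneg (by linarith : 0 ≤ m - 2) (by linarith : 0 ≤ m + δ))]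
  calc exp (-t * m * (m + δ)) * (m + δ) ^ ζ
      ≤ exp (-t * m * (m + δ)) *
          ((2 * (1 + δ)) ^ ζ * exp (ζ * ((m + δ) / (2 * (1 + δ)) - 1))) := by
        gcongr
        exact rpow_le_rpow_mul_exp hc (by linarith) hζ
    _ = (2 * (1 + δ)) ^ ζ * exp (-t * m * (m + δ) + ζ * ((m + δ) / (2 * (1 + δ)) - 1)) := by
        rw [exp_add]; ring
    _ ≤ (2 * (1 + δ)) ^ ζ * exp (-2 * t * (1 + δ) + -(2 * t * (m - 1))) := by gcongr
    _ = exp (-2 * t * (1 + δ)) * (2 * (1 + δ)) ^ ζ * exp (-(2 * t * (m - 1))) := by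
        rw [exp_add]; ring

lemma hasSum_exp_neg_pow_succ {a : ℝ} (ha : 0 < a) :
    HasSum (fun n : ℕ => exp (-a) ^ (n + 1)) (exp a - 1)⁻¹ := by
  have hq : exp (-a) < 1 := exp_lt_one_iff.mpr (neg_neg_of_pos ha)
  have h := (hasSum_geometric_of_lt_one (exp_pos _).le hq).mul_left (exp (-a))
  simp only [← pow_succ'] at h
  have hsum : exp (-a) * (1 - exp (-a))⁻¹ = (exp a - 1)⁻¹ := by
    have : exp a - 1 ≠ 0 := (sub_pos.mpr (one_lt_exp_iff.mpr ha)).ne'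
    rw [exp_neg]
    field_simp
  rwa [hsum] at h

theorem tail_sum_bound (δ ζ ζ₀ t T : ℝ) (hδ : 0 ≤ δ) (hζ₀ : 0 ≤ ζ₀) (hζ : ζ₀ ≤ ζ)
    (hT : 0 < T) (ht : T ≤ t) (hcond : ζ ≤ 2 * t * (δ + 1)) :
    (∑' n : ℕ, Real.exp (-t * ((n : ℝ) + 2) * (((n : ℝ) + 2) + δ)) * (((n : ℝ) + 2) + δ) ^ ζ) ≤
      1 / (2 * T) *
        (Real.sqrt (2 * π) * Real.sqrt (ζ₀ + 1) * Real.exp (-ζ₀ + 1 / (12 * (ζ₀ + 1))) + 1) *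
        Real.exp (-2 * t * (1 + δ)) * 2 ^ ζ * (1 + δ) ^ ζ := by
  have ht0 : 0 < t := hT.trans_le ht
  set E := exp (-2 * t * (1 + δ)) * (2 * (1 + δ)) ^ ζ
  have hgeo := hasSum_exp_neg_pow_succ (mul_pos two_pos ht0)
  have hdom : Summable fun n : ℕ => E * exp (-(2 * t)) ^ (n + 1) := hgeo.summable.mul_left E
  have hterm : ∀ n : ℕ, exp (-t * ((n : ℝ) + 2) * (((n : ℝ) + 2) + δ)) * (((n : ℝ) + 2) + δ) ^ ζ ≤
      E * exp (-(2 * t)) ^ (n + 1) := by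
    intro n
    rw [← exp_nat_mul]
    have hm : (2 : ℝ) ≤ n + 2 := le_add_of_nonneg_left n.cast_nonneg
    convert exp_neg_mul_mul_rpow_le hδ (hζ₀.trans hζ) hcond hm using 3
    push_cast; ring
  have hsum := Summable.of_nonneg_of_le
    (fun n : ℕ => mul_nonneg (exp_pos _).le (rpow_nonneg (by positivity) ζ)) hterm hdom
  have hG : 0 ≤ sqrt (2 * π) * sqrt (ζ₀ + 1) * exp (-ζ₀ + 1 / (12 * (ζ₀ + 1))) := by positivity
  calc _ ≤ ∑' n : ℕ, E * exp (-(2 * t)) ^ (n + 1) := hsum.tsum_le_tsum hterm hdom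
    _ = E * (exp (2 * t) - 1)⁻¹ := by rw [tsum_mul_left, hgeo.tsum_eq]
    _ ≤ E * (2 * T)⁻¹ := by gcongr; linarith [add_one_le_exp (2 * t)]
    _ ≤ E * (2 * T)⁻¹ * (sqrt (2 * π) * sqrt (ζ₀ + 1) * exp (-ζ₀ + 1 / (12 * (ζ₀ + 1))) + 1) :=
        le_mul_of_one_le_right (by positivity) (by linarith)
    _ = _ := by simp only [E]; rw [mul_rpow zero_le_two (by linarith)]; ring
end

section
/- Let α ∈ (−1, −1/2) be fixed and set k_α := 2^{α−1/2}·|α+1/2|·Γ(α+1)/(√π·Γ(α+3/2)) and K_α := Γ(α+1)/(√π·Γ(α+3/2)). Then for every u ∈ (−1,1), k_α·|u|·(1−|u|)^{α+1/2} ≤ |Π_α(u)| ≤ K_α·|u|·(1−|u|)^{α+1/2}. -/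
open Real

/-- The function `Π_α(u)` for `α ∈ (-1, -1/2)`. -/
noncomputable def PiFun (α u : ℝ) : ℝ :=
  Real.Gamma (α + 1) / (Real.sqrt π * Real.Gamma (α + 1/2)) *
    ∫ w in (0 : ℝ)..u, (1 - w ^ 2) ^ (α - 1/2)

/-! Since `1 - w ≤ 1 - w ^ 2 ≤ 2 (1 - w)` on `[0, 1)` and the exponent `α - 1/2` is negative,
the integral in `Π_α(v)`, `0 ≤ v < 1`, lies between `2 ^ (α - 1/2) J(v)` and `J(v)`, where
`J(v) = ∫₀^v (1 - w) ^ (α - 1/2) = ((1 - v) ^ (α + 1/2) - 1) / |α + 1/2|`. Bernoulli's inequality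
for the exponent `|α + 1/2| ≤ 1` bounds this from below by `v (1 - v) ^ (α + 1/2)`, and
`(1 - v) ^ (α + 3/2) ≤ 1` bounds it from above by `v (1 - v) ^ (α + 1/2) / |α + 1/2|`.
The integrand is even, so `|Π_α(u)| = |Π_α(|u|)|`, and `Γ(α + 3/2) = (α + 1/2) Γ(α + 1/2)`
turns the normalising constant of `Π_α` into `|α + 1/2| K_α`. -/

lemma integral_one_sub_rpow {p u : ℝ} (hp : p ≠ -1) (hu : u < 1) :
    ∫ w in (0 : ℝ)..u, (1 - w) ^ p = (1 - (1 - u) ^ (p + 1)) / (p + 1) := by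
  rw [intervalIntegral.integral_comp_sub_left (fun x => x ^ p), sub_zero,
    integral_rpow (Or.inr ⟨hp, fun h => by
      rw [Set.mem_uIcc] at h; rcases h with h | h <;> linarith⟩), one_rpow]

lemma integral_one_sub_rpow_bounds {p v : ℝ} (hp₁ : -2 ≤ p) (hp₂ : p < -1) (hv₀ : 0 ≤ v)
    (hv₁ : v < 1) :
    v * (1 - v) ^ (p + 1) ≤ ∫ w in (0 : ℝ)..v, (1 - w) ^ p ∧
      ∫ w in (0 : ℝ)..v, (1 - w) ^ p ≤ v * (1 - v) ^ (p + 1) / |p + 1| := by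
  rw [integral_one_sub_rpow (by linarith) hv₁]
  set q := p + 1
  set t := 1 - v
  have ht₀ : 0 < t := by linarith
  have htq : 0 < t ^ q := rpow_pos_of_pos ht₀ q
  have hv : v = 1 - t := by ring
  rw [hv, abs_of_neg (by linarith : q < 0)]
  constructor
  · -- Bernoulli's inequality `t ^ (-q) ≤ 1 + (-q) (t - 1)`, multiplied by `t ^ q`
    have hB := rpow_one_add_le_one_add_mul_self (s := t - 1) (p := -q) (by linarith)
      (by linarith) (by linarith)
    rw [add_sub_cancel, rpow_neg ht₀.le] at hB
    rw [le_div_iff_of_neg (by linarith)]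
    have := (inv_le_iff_one_le_mul₀ htq).mp hB
    nlinarith
  · have h : t ^ q * t ≤ 1 := by
      rw [← rpow_add_one ht₀.ne']
      exact rpow_le_one ht₀.le (by linarith) (by linarith)
    rw [← neg_div_neg_eq, neg_sub]
    gcongr <;> linarith

lemma rpow_one_sub_sq_bounds {p w : ℝ} (hp : p ≤ 0) (hw₀ : 0 ≤ w) (hw₁ : w < 1) :
    2 ^ p * (1 - w) ^ p ≤ (1 - w ^ 2) ^ p ∧ (1 - w ^ 2) ^ p ≤ (1 - w) ^ p := by
  have hw : 0 < 1 - w := by linarith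
  have hw2 : 0 < 1 - w ^ 2 := by nlinarith
  refine ⟨?_, rpow_le_rpow_of_nonpos hw (by nlinarith) hp⟩
  rw [← mul_rpow zero_le_two hw.le]
  exact rpow_le_rpow_of_nonpos hw2 (by nlinarith) hp

lemma integral_one_sub_sq_rpow_bounds {p v : ℝ} (hp₁ : -2 ≤ p) (hp₂ : p < -1) (hv₀ : 0 ≤ v)
    (hv₁ : v < 1) :
    2 ^ p * (v * (1 - v) ^ (p + 1)) ≤ ∫ w in (0 : ℝ)..v, (1 - w ^ 2) ^ p ∧
      ∫ w in (0 : ℝ)..v, (1 - w ^ 2) ^ p ≤ v * (1 - v) ^ (p + 1) / |p + 1| := by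
  obtain ⟨hJ₁, hJ₂⟩ := integral_one_sub_rpow_bounds hp₁ hp₂ hv₀ hv₁
  have hpos : ∀ w ∈ Set.uIcc 0 v, 0 < 1 - w := fun w hw => by
    rw [Set.uIcc_of_le hv₀] at hw; linarith [hw.2]
  have hpos2 : ∀ w ∈ Set.uIcc 0 v, 0 < 1 - w ^ 2 := fun w hw => by
    rw [Set.uIcc_of_le hv₀] at hw; nlinarith [hw.1, hw.2]
  have hJ : IntervalIntegrable (fun w : ℝ => (1 - w) ^ p) MeasureTheory.volume 0 v :=
    (ContinuousOn.rpow_const (by fun_prop) fun w hw => Or.inl (hpos w hw).ne').intervalIntegrable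
  have hI : IntervalIntegrable (fun w : ℝ => (1 - w ^ 2) ^ p) MeasureTheory.volume 0 v :=
    (ContinuousOn.rpow_const (by fun_prop) fun w hw => Or.inl (hpos2 w hw).ne').intervalIntegrable
  have hpt : ∀ w ∈ Set.Icc 0 v,
      2 ^ p * (1 - w) ^ p ≤ (1 - w ^ 2) ^ p ∧ (1 - w ^ 2) ^ p ≤ (1 - w) ^ p :=
    fun w hw => rpow_one_sub_sq_bounds (by linarith) hw.1 (by linarith [hw.2])
  constructor
  · calc 2 ^ p * (v * (1 - v) ^ (p + 1)) ≤ 2 ^ p * ∫ w in (0 : ℝ)..v, (1 - w) ^ p := by gcongr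
      _ = ∫ w in (0 : ℝ)..v, 2 ^ p * (1 - w) ^ p := (intervalIntegral.integral_const_mul _ _).symm
      _ ≤ _ := intervalIntegral.integral_mono_on hv₀ (hJ.const_mul _) hI fun w hw => (hpt w hw).1
  · exact (intervalIntegral.integral_mono_on hv₀ hI hJ fun w hw => (hpt w hw).2).trans hJ₂

lemma abs_integral_zero_abs_of_even {f : ℝ → ℝ} (hf : ∀ x, f (-x) = f x) (u : ℝ) :
    |∫ x in (0 : ℝ)..|u|, f x| = |∫ x in (0 : ℝ)..u, f x| := by
  rcases abs_choice u with h | h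
  · rw [h]
  · rw [h, ← intervalIntegral.integral_congr fun x _ => hf x, intervalIntegral.integral_comp_neg,
      neg_neg, neg_zero, intervalIntegral.integral_symm, abs_neg]

lemma abs_PiFun (α u : ℝ) :
    |PiFun α u| = |Real.Gamma (α + 1) / (Real.sqrt π * Real.Gamma (α + 1/2))| *
      |∫ w in (0 : ℝ)..|u|, (1 - w ^ 2) ^ (α - 1/2)| := by
  rw [PiFun, abs_mul, abs_integral_zero_abs_of_even fun w => by rw [neg_sq]]

lemma Gamma_div_sqrt_pi_mul_Gamma_add_three_halves {α : ℝ} (hα₁ : -1 < α) (hα₂ : α ≠ -1/2) :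
    Real.Gamma (α + 1) / (Real.sqrt π * Real.Gamma (α + 3/2)) =
      |Real.Gamma (α + 1) / (Real.sqrt π * Real.Gamma (α + 1/2))| / |α + 1/2| := by
  have ha : α + 1/2 ≠ 0 := fun h => hα₂ (by linarith)
  have hpos : 0 < Real.Gamma (α + 1) / (Real.sqrt π * Real.Gamma (α + 3/2)) := by
    have := Real.Gamma_pos_of_pos (by linarith : 0 < α + 1)
    have := Real.Gamma_pos_of_pos (by linarith : 0 < α + 3/2)
    positivity
  rw [← abs_of_pos hpos, ← abs_div, show α + 3/2 = α + 1/2 + 1 by ring, Real.Gamma_add_one ha]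
  congr 1
  field_simp

theorem PiFun_pointwise_bounds (α : ℝ) (hα : α ∈ Set.Ioo (-1 : ℝ) (-1/2))
    (u : ℝ) (hu : u ∈ Set.Ioo (-1 : ℝ) 1) :
    2 ^ (α - 1/2) * |α + 1/2| * Real.Gamma (α + 1) / (Real.sqrt π * Real.Gamma (α + 3/2)) *
        (|u| * (1 - |u|) ^ (α + 1/2)) ≤ |PiFun α u| ∧
    |PiFun α u| ≤
      Real.Gamma (α + 1) / (Real.sqrt π * Real.Gamma (α + 3/2)) *
        (|u| * (1 - |u|) ^ (α + 1/2)) := by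
  obtain ⟨hα₁, hα₂⟩ := hα
  obtain ⟨hlow, hup⟩ := integral_one_sub_sq_rpow_bounds (p := α - 1/2) (by linarith) (by linarith)
    (abs_nonneg u) (abs_lt.mpr hu)
  rw [show α - 1/2 + 1 = α + 1/2 by ring] at hlow hup
  have hu' : 0 ≤ 1 - |u| := by linarith [abs_lt.mpr hu]
  have hI : 0 ≤ ∫ w in (0 : ℝ)..|u|, (1 - w ^ 2) ^ (α - 1/2) := by
    refine le_trans ?_ hlow
    positivity
  have ha : |α + 1/2| ≠ 0 := abs_ne_zero.mpr (by linarith)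
  rw [abs_PiFun, abs_of_nonneg hI, mul_div_assoc,
    Gamma_div_sqrt_pi_mul_Gamma_add_three_halves hα₁ hα₂.ne]
  set C := |Real.Gamma (α + 1) / (Real.sqrt π * Real.Gamma (α + 1/2))|
  constructor
  · calc 2 ^ (α - 1/2) * |α + 1/2| * (C / |α + 1/2|) * (|u| * (1 - |u|) ^ (α + 1/2))
        = C * (2 ^ (α - 1/2) * (|u| * (1 - |u|) ^ (α + 1/2))) := by
          rw [mul_assoc _ |α + 1/2|, mul_div_cancel₀ _ ha]; ring
      _ ≤ _ := by gcongr
  · calc C * ∫ w in (0 : ℝ)..|u|, (1 - w ^ 2) ^ (α - 1/2)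
        ≤ C * (|u| * (1 - |u|) ^ (α + 1/2) / |α + 1/2|) := by gcongr
      _ = _ := by ring
end

section
/- Let α ∈ (−1, −1/2) be fixed and set k_α := 2^{α−1/2}·|α+1/2|·Γ(α+1)/(√π·Γ(α+3/2)) and K_α := Γ(α+1)/(√π·Γ(α+3/2)). Then for every u' ∈ [0,1], (k_α/(α+3/2))·(1−u')^{α+3/2} ≤ ∫_{u'}^1 |Π_α(u)| du ≤ (K_α/(α+3/2))·(1−u')^{α+3/2}. -/
open Real

set_option maxHeartbeats 1000000 in
theorem PiFun_tail_integral_bounds (α : ℝ) (hα : α ∈ Set.Ioo (-1 : ℝ) (-1/2))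
    (u' : ℝ) (hu' : u' ∈ Set.Icc (0 : ℝ) 1) :
    2 ^ (α - 1/2) * |α + 1/2| * Real.Gamma (α + 1) / (Real.sqrt π * Real.Gamma (α + 3/2)) /
        (α + 3/2) * (1 - u') ^ (α + 3/2) ≤ ∫ u in u'..1, |PiFun α u| ∧
    (∫ u in u'..1, |PiFun α u|) ≤
      Real.Gamma (α + 1) / (Real.sqrt π * Real.Gamma (α + 3/2)) / (α + 3/2) *
        (1 - u') ^ (α + 3/2) := by
  obtain ⟨hα1, hα2⟩ := hα
  obtain ⟨hu0, hu1⟩ := hu'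
  set q : ℝ := α - 1/2 with hq_def
  set p : ℝ := α + 1/2 with hp_def
  have hp_neg : p < 0 := by rw [hp_def]; linarith
  have hp_gt : -1 < p := by rw [hp_def]; linarith
  have hp_ne : p ≠ 0 := ne_of_lt hp_neg
  have hq_neg : q < 0 := by rw [hq_def]; linarith
  have hs_pos : (0:ℝ) < α + 3/2 := by linarith
  have hs_le : α + 3/2 ≤ 1 := by linarith
  have hsqrt : (0:ℝ) < Real.sqrt π := Real.sqrt_pos.mpr Real.pi_pos
  have hG1 : 0 < Real.Gamma (α + 1) := Real.Gamma_pos_of_pos (by linarith)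
  have hG3 : 0 < Real.Gamma (α + 3/2) := Real.Gamma_pos_of_pos hs_pos
  have hGadd : Real.Gamma (α + 3/2) = p * Real.Gamma p := by
    have := Real.Gamma_add_one (s := p) hp_ne
    rw [show p + 1 = α + 3/2 by rw [hp_def]; ring] at this
    exact this
  have hGp_neg : Real.Gamma p < 0 := by
    rcases lt_trichotomy (Real.Gamma p) 0 with h | h | h
    · exact h
    · rw [hGadd, h, mul_zero] at hG3; linarith
    · nlinarith [hGadd]
  set C : ℝ := Real.Gamma (α + 1) / (Real.sqrt π * Real.Gamma (α + 1/2)) with hC_def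
  set K : ℝ := Real.Gamma (α + 1) / (Real.sqrt π * Real.Gamma (α + 3/2)) with hK_def
  have hK_pos : 0 < K := by
    rw [hK_def]; positivity
  have hGp_ne : Real.Gamma p ≠ 0 := ne_of_lt hGp_neg
  have hC_eq : C = p * K := by
    rw [hC_def, hK_def, ← hp_def, hGadd]
    field_simp
  have hC_neg : C < 0 := by
    rw [hC_eq]; exact mul_neg_of_neg_of_pos hp_neg hK_pos
  -- continuity of the inner integrand on [0, u] for u < 1
  have hg_cont : ∀ u : ℝ, 0 ≤ u → u < 1 →
      ContinuousOn (fun w : ℝ => (1 - w ^ 2) ^ q) (Set.uIcc 0 u) := by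
    intro u hu0' hu1'
    rw [Set.uIcc_of_le hu0']
    apply ContinuousOn.rpow_const
    · exact (continuousOn_const.sub (continuous_pow 2).continuousOn)
    · intro x hx
      left
      have hx2 : x ^ 2 < 1 := by
        rcases hx with ⟨h1, h2⟩
        nlinarith
      nlinarith
  have hh_cont : ∀ u : ℝ, 0 ≤ u → u < 1 →
      ContinuousOn (fun w : ℝ => (1 - w) ^ q) (Set.uIcc 0 u) := by
    intro u hu0' hu1'
    rw [Set.uIcc_of_le hu0']
    apply ContinuousOn.rpow_const
    · exact continuousOn_const.sub continuousOn_id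
    · intro x hx
      left
      have : x ≤ u := hx.2
      nlinarith
  -- the value of ∫_0^u (1-w)^q dw
  have hH_val : ∀ u : ℝ, 0 ≤ u → u < 1 →
      (∫ w in (0:ℝ)..u, (1 - w) ^ q) = (1 - (1 - u) ^ p) / p := by
    intro u hu0' hu1'
    have := intervalIntegral.integral_comp_sub_left (a := (0:ℝ)) (b := u)
      (fun t : ℝ => t ^ q) 1
    simp only [sub_zero] at this
    rw [this]
    have hne : q ≠ -1 := by
      rw [hq_def]; intro h
      have : α = -1/2 := by linarith
      linarith
    have h0 : (0:ℝ) ∉ Set.uIcc (1 - u) 1 := by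
      rw [Set.uIcc_of_le (by linarith : (1:ℝ) - u ≤ 1)]
      intro h0
      have := h0.1
      linarith
    rw [integral_rpow (Or.inr ⟨hne, h0⟩)]
    have hqp : q + 1 = p := by rw [hq_def, hp_def]; ring
    rw [hqp, Real.one_rpow]
  -- pointwise comparison of integrands
  have hg_le : ∀ u : ℝ, 0 ≤ u → u < 1 → ∀ w ∈ Set.Icc (0:ℝ) u,
      (1 - w ^ 2) ^ q ≤ (1 - w) ^ q := by
    intro u hu0' hu1' w hw
    obtain ⟨hw0, hwu⟩ := hw
    have h1w : 0 < 1 - w := by nlinarith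
    apply Real.rpow_le_rpow_of_nonpos h1w _ hq_neg.le
    nlinarith
  have hg_ge : ∀ u : ℝ, 0 ≤ u → u < 1 → ∀ w ∈ Set.Icc (0:ℝ) u,
      2 ^ q * (1 - w) ^ q ≤ (1 - w ^ 2) ^ q := by
    intro u hu0' hu1' w hw
    obtain ⟨hw0, hwu⟩ := hw
    have h1w : 0 < 1 - w := by nlinarith
    have h1pw : 0 < 1 + w := by linarith
    have heq : (1 - w ^ 2 : ℝ) = (1 + w) * (1 - w) := by ring
    rw [heq, Real.mul_rpow h1pw.le h1w.le]
    apply mul_le_mul_of_nonneg_right _ (Real.rpow_nonneg h1w.le q)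
    exact Real.rpow_le_rpow_of_nonpos h1pw (by linarith) hq_neg.le
  -- interval integrability of the integrands on [0,u]
  have hgi : ∀ u : ℝ, 0 ≤ u → u < 1 →
      IntervalIntegrable (fun w : ℝ => (1 - w ^ 2) ^ q) MeasureTheory.volume 0 u := by
    intro u hu0' hu1'
    exact (hg_cont u hu0' hu1').intervalIntegrable
  have hhi : ∀ u : ℝ, 0 ≤ u → u < 1 →
      IntervalIntegrable (fun w : ℝ => (1 - w) ^ q) MeasureTheory.volume 0 u := by
    intro u hu0' hu1'
    exact (hh_cont u hu0' hu1').intervalIntegrable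
  -- bounds on F(u) = ∫_0^u (1-w^2)^q dw
  have hF_ub : ∀ u : ℝ, 0 ≤ u → u < 1 →
      (∫ w in (0:ℝ)..u, (1 - w ^ 2) ^ q) ≤ (1 - (1 - u) ^ p) / p := by
    intro u hu0' hu1'
    rw [← hH_val u hu0' hu1']
    apply intervalIntegral.integral_mono_on hu0' (hgi u hu0' hu1') (hhi u hu0' hu1')
    exact hg_le u hu0' hu1'
  have hF_lb : ∀ u : ℝ, 0 ≤ u → u < 1 →
      2 ^ q * ((1 - (1 - u) ^ p) / p) ≤ ∫ w in (0:ℝ)..u, (1 - w ^ 2) ^ q := by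
    intro u hu0' hu1'
    rw [← hH_val u hu0' hu1', ← intervalIntegral.integral_const_mul]
    apply intervalIntegral.integral_mono_on hu0'
      ((hhi u hu0' hu1').const_mul _) (hgi u hu0' hu1')
    exact hg_ge u hu0' hu1'
  have hF_nonneg : ∀ u : ℝ, 0 ≤ u → u < 1 →
      0 ≤ ∫ w in (0:ℝ)..u, (1 - w ^ 2) ^ q := by
    intro u hu0' hu1'
    apply intervalIntegral.integral_nonneg hu0'
    intro x hx
    apply Real.rpow_nonneg
    nlinarith [hx.1, hx.2]
  -- |PiFun α u| and its pointwise bounds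
  have hPi_abs : ∀ u : ℝ, 0 ≤ u → u < 1 →
      |PiFun α u| = (-C) * ∫ w in (0:ℝ)..u, (1 - w ^ 2) ^ q := by
    intro u hu0' hu1'
    have : PiFun α u = C * ∫ w in (0:ℝ)..u, (1 - w ^ 2) ^ q := rfl
    rw [this, abs_mul, abs_of_neg hC_neg, abs_of_nonneg (hF_nonneg u hu0' hu1')]
  have hPi_ub : ∀ u : ℝ, 0 ≤ u → u < 1 →
      |PiFun α u| ≤ K * (1 - u) ^ p := by
    intro u hu0' hu1'
    rw [hPi_abs u hu0' hu1']
    have h1 : (-C) * (∫ w in (0:ℝ)..u, (1 - w ^ 2) ^ q) ≤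
        (-C) * ((1 - (1 - u) ^ p) / p) := by
      apply mul_le_mul_of_nonneg_left (hF_ub u hu0' hu1') (by linarith)
    refine h1.trans ?_
    rw [hC_eq]
    have hexp : 0 ≤ (1 - u) ^ p := Real.rpow_nonneg (by linarith) p
    have : -(p * K) * ((1 - (1 - u) ^ p) / p) = K * ((1 - u) ^ p - 1) := by
      field_simp
      ring
    rw [this]
    nlinarith
  have hPi_lb : ∀ u : ℝ, 0 ≤ u → u < 1 →
      2 ^ q * K * ((1 - u) ^ p - 1) ≤ |PiFun α u| := by
    intro u hu0' hu1'
    rw [hPi_abs u hu0' hu1']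
    have h1 : (-C) * (2 ^ q * ((1 - (1 - u) ^ p) / p)) ≤
        (-C) * ∫ w in (0:ℝ)..u, (1 - w ^ 2) ^ q := by
      apply mul_le_mul_of_nonneg_left (hF_lb u hu0' hu1') (by linarith)
    refine le_trans (le_of_eq ?_) h1
    rw [hC_eq]
    field_simp
    ring
  -- integrability of the bounding functions on [u',1]
  have hUBi : IntervalIntegrable (fun u : ℝ => (1 - u) ^ p) MeasureTheory.volume u' 1 := by
    have := (intervalIntegral.intervalIntegrable_rpow' (a := 1 - u') (b := 0) hp_gt).comp_sub_left 1
    simpa using this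
  -- value of ∫_{u'}^1 (1-u)^p du
  have hI1 : (∫ u in u'..1, (1 - u) ^ p) = (1 - u') ^ (α + 3/2) / (α + 3/2) := by
    have := intervalIntegral.integral_comp_sub_left (a := u') (b := (1:ℝ))
      (fun t : ℝ => t ^ p) 1
    simp only [sub_self] at this
    rw [this, integral_rpow (Or.inl hp_gt)]
    have hps : p + 1 = α + 3/2 := by rw [hp_def]; ring
    rw [hps, Real.zero_rpow (by linarith), sub_zero]
  -- measurability of |PiFun α| on (u',1)
  have hcontOn : ContinuousOn (fun u : ℝ => |PiFun α u|) (Set.Ioo u' 1) := by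
    apply ContinuousOn.abs
    intro x hx
    obtain ⟨hx1, hx2⟩ := hx
    have hx0 : 0 < x := lt_of_le_of_lt hu0 hx1
    set b : ℝ := (x + 1) / 2 with hb_def
    have hxb : x < b := by rw [hb_def]; linarith
    have hb1 : b < 1 := by rw [hb_def]; linarith
    have hb0 : 0 ≤ b := by rw [hb_def]; linarith
    have hInt : MeasureTheory.IntegrableOn (fun w : ℝ => (1 - w ^ 2) ^ q)
        (Set.uIcc 0 b) MeasureTheory.volume := by
      apply ContinuousOn.integrableOn_compact isCompact_uIcc
      exact hg_cont b hb0 hb1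
    have hcont := intervalIntegral.continuousOn_primitive_interval hInt
    have hnbhd : Set.uIcc (0:ℝ) b ∈ nhds x := by
      rw [Set.uIcc_of_le hb0]
      exact Icc_mem_nhds hx0 hxb
    have hCA : ContinuousAt (fun u : ℝ => ∫ w in (0:ℝ)..u, (1 - w ^ 2) ^ q) x :=
      hcont.continuousAt hnbhd
    exact (continuousAt_const.mul hCA).continuousWithinAt
  have hu'le : u' ≤ 1 := hu1
  -- rewrite the interval integral as an integral over Ioo
  have hres : MeasureTheory.volume.restrict (Set.Ioc u' 1) =
      MeasureTheory.volume.restrict (Set.Ioo u' 1) :=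
    (MeasureTheory.Measure.restrict_congr_set MeasureTheory.Ioo_ae_eq_Ioc).symm
  have h_eq : (∫ u in u'..1, |PiFun α u|) = ∫ u in Set.Ioo u' 1, |PiFun α u| := by
    rw [intervalIntegral.integral_of_le hu'le]
    rw [hres]
  have hmeas : MeasureTheory.AEStronglyMeasurable (fun u : ℝ => |PiFun α u|)
      (MeasureTheory.volume.restrict (Set.Ioo u' 1)) :=
    hcontOn.aestronglyMeasurable measurableSet_Ioo
  have hUBiOn : MeasureTheory.IntegrableOn (fun u : ℝ => K * (1 - u) ^ p)
      (Set.Ioo u' 1) MeasureTheory.volume := by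
    exact ((intervalIntegrable_iff_integrableOn_Ioc_of_le hu'le).mp
      (hUBi.const_mul K)).mono_set Set.Ioo_subset_Ioc_self
  have hPiInt : MeasureTheory.IntegrableOn (fun u : ℝ => |PiFun α u|)
      (Set.Ioo u' 1) MeasureTheory.volume := by
    apply MeasureTheory.Integrable.mono' hUBiOn hmeas
    filter_upwards [MeasureTheory.ae_restrict_mem measurableSet_Ioo] with u hu
    rw [Real.norm_eq_abs, abs_abs]
    exact hPi_ub u (le_trans hu0 hu.1.le) hu.2
  -- upper bound
  have hUB_int_val : (∫ u in Set.Ioo u' 1, K * (1 - u) ^ p) =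
      K / (α + 3/2) * (1 - u') ^ (α + 3/2) := by
    have : (∫ u in Set.Ioo u' 1, K * (1 - u) ^ p) = ∫ u in u'..1, K * (1 - u) ^ p := by
      rw [intervalIntegral.integral_of_le hu'le, hres]
    rw [this, intervalIntegral.integral_const_mul, hI1]
    ring
  have hupper : (∫ u in u'..1, |PiFun α u|) ≤
      K / (α + 3/2) * (1 - u') ^ (α + 3/2) := by
    rw [h_eq, ← hUB_int_val]
    apply MeasureTheory.setIntegral_mono_on hPiInt hUBiOn measurableSet_Ioo
    intro u hu
    exact hPi_ub u (le_trans hu0 hu.1.le) hu.2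
  -- lower bound
  have hLBiOn : MeasureTheory.IntegrableOn
      (fun u : ℝ => 2 ^ q * K * ((1 - u) ^ p - 1)) (Set.Ioo u' 1) MeasureTheory.volume := by
    exact ((intervalIntegrable_iff_integrableOn_Ioc_of_le hu'le).mp
      ((hUBi.sub (intervalIntegrable_const)).const_mul _)).mono_set Set.Ioo_subset_Ioc_self
  have hLB_int_val : (∫ u in Set.Ioo u' 1, 2 ^ q * K * ((1 - u) ^ p - 1)) =
      2 ^ q * K * ((1 - u') ^ (α + 3/2) / (α + 3/2) - (1 - u')) := by
    have h1 : (∫ u in Set.Ioo u' 1, 2 ^ q * K * ((1 - u) ^ p - 1)) =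
        ∫ u in u'..1, 2 ^ q * K * ((1 - u) ^ p - 1) := by
      rw [intervalIntegral.integral_of_le hu'le, hres]
    rw [h1, intervalIntegral.integral_const_mul,
      intervalIntegral.integral_sub hUBi intervalIntegrable_const, hI1,
      intervalIntegral.integral_const]
    simp
  have hlow1 : 2 ^ q * K * ((1 - u') ^ (α + 3/2) / (α + 3/2) - (1 - u')) ≤
      ∫ u in u'..1, |PiFun α u| := by
    rw [h_eq, ← hLB_int_val]
    apply MeasureTheory.setIntegral_mono_on hLBiOn hPiInt measurableSet_Ioo
    intro u hu
    exact hPi_lb u (le_trans hu0 hu.1.le) hu.2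
  -- the elementary inequality t^{α+3/2} ≥ t for t = 1 - u' ∈ [0,1]
  have hkey : (1 - u') ≤ (1 - u') ^ (α + 3/2) := by
    rcases eq_or_lt_of_le hu1 with h | h
    · rw [← h]
      simp [Real.zero_rpow (ne_of_gt hs_pos)]
    · have ht0 : 0 < 1 - u' := by linarith
      calc (1 - u') = (1 - u') ^ (1:ℝ) := (Real.rpow_one _).symm
        _ ≤ (1 - u') ^ (α + 3/2) :=
          Real.rpow_le_rpow_of_exponent_ge ht0 (by linarith) hs_le
  constructor
  · refine le_trans ?_ hlow1
    have h2q : (0:ℝ) < 2 ^ q := Real.rpow_pos_of_pos (by norm_num) q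
    have habs : |α + 1/2| = -p := abs_of_neg hp_neg
    have hLHS : 2 ^ (α - 1/2) * |α + 1/2| * Real.Gamma (α + 1) /
        (Real.sqrt π * Real.Gamma (α + 3/2)) / (α + 3/2) * (1 - u') ^ (α + 3/2) =
        2 ^ q * K * ((-p) * (1 - u') ^ (α + 3/2) / (α + 3/2)) := by
      rw [habs, hK_def, hq_def]
      field_simp
    rw [hLHS]
    apply mul_le_mul_of_nonneg_left _ (by positivity)
    have h2 : (α + 3/2) * (1 - u') ≤ (α + 3/2) * (1 - u') ^ (α + 3/2) :=
      mul_le_mul_of_nonneg_left hkey hs_pos.le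
    rw [hp_def, div_le_iff₀ hs_pos]
    have hexpand : ((1 - u') ^ (α + 3/2) / (α + 3/2) - (1 - u')) * (α + 3/2) =
        (1 - u') ^ (α + 3/2) - (1 - u') * (α + 3/2) := by
      rw [sub_mul, div_mul_cancel₀ _ (ne_of_gt hs_pos)]
    rw [hexpand]
    nlinarith [h2]
  · exact hupper
end

section
/- Let ω ∈ [1/2, 2] and set m_ω := (1−2^{−ω})/(e·ω) and M_ω := 2/((1−1/e)²·ω). Then for every ξ ≥ 0, m_ω·(1+ξ)^{ω−1}·e^{−ξ} ≤ ∫_ξ^∞ u^{ω−1}·e^{−u} du ≤ M_ω·(1+ξ)^{ω−1}·e^{−ξ}. -/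
/-!
Substituting `u = ξ + t` writes the integral as `e^{-ξ} ∫₀^∞ (ξ + t)^p e^{-t} dt` with
`p = ω - 1 ∈ (-1, 1]`. Since `ξ + t ≤ (1 + ξ)(1 + t)` for `p ≥ 0`, and
`ξ + t ≥ (1 + ξ) t / (1 + t)` for `p ≤ 0`, subadditivity of `x ↦ x^{|p|}` gives
`(ξ + t)^p ≤ (1 + ξ)^p (1 + t^p)`, whence the upper bound `(1 + ξ)^p (1 + Γ(ω))`;
convexity of `Γ` on `[1, 3]` gives `ω Γ(ω) = Γ(ω + 1) ≤ 2`. For the lower bound,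
`(ξ + t)^p ≥ (1 + ξ)^p` on `t ≥ 1` if `p ≥ 0` and on `t ≤ 1` if `p ≤ 0`, and both ranges carry
`e^{-t}`-mass at least `1/e`. The stated constants are cruder: `m_ω ≤ 1/e` and `1 + Γ(ω) ≤ M_ω`.
-/

open Real MeasureTheory Set

theorem setIntegral_Ioi_eq_setIntegral_Ioi_zero_add {E : Type*} [NormedAddCommGroup E]
    [NormedSpace ℝ E] (f : ℝ → E) (a : ℝ) :
    ∫ u in Ioi a, f u = ∫ t in Ioi 0, f (a + t) := by
  have hpre : (fun t => a + t) ⁻¹' Ioi a = Ioi 0 := by ext t; simp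
  rw [← hpre, (measurePreserving_add_left volume a).setIntegral_preimage_emb
    (measurableEmbedding_addLeft a)]

theorem integral_Ioi_rpow_mul_exp_neg_eq (ξ p : ℝ) :
    ∫ u in Ioi ξ, u ^ p * exp (-u) = exp (-ξ) * ∫ t in Ioi 0, (ξ + t) ^ p * exp (-t) := by
  rw [setIntegral_Ioi_eq_setIntegral_Ioi_zero_add, ← integral_const_mul]
  congr 1 with t
  rw [neg_add, exp_add]
  ring

theorem integral_Ioc_exp_neg {a b : ℝ} (hab : a ≤ b) :
    ∫ t in Ioc a b, exp (-t) = exp (-a) - exp (-b) := by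
  rw [← intervalIntegral.integral_of_le hab, intervalIntegral.integral_comp_neg (fun t => exp t),
    integral_exp]

theorem Gamma_le_two_div {s : ℝ} (hs0 : 0 < s) (hs2 : s ≤ 2) : Gamma s ≤ 2 / s := by
  have hΓ3 : Gamma 3 = 2 := by simp
  have hmem : s + 1 ∈ segment ℝ 1 3 := by
    rw [segment_eq_Icc (by norm_num)]
    constructor <;> linarith
  have h := convexOn_Gamma.le_on_segment (by norm_num) (by norm_num) hmem
  rw [Gamma_add_one hs0.ne', Gamma_one, hΓ3, max_eq_right one_le_two] at h
  rw [le_div_iff₀ hs0]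
  linarith

theorem one_sub_two_rpow_neg_le {x : ℝ} (hx : 0 ≤ x) : 1 - 2 ^ (-x) ≤ x := by
  have h := add_one_le_exp (log 2 * -x)
  rw [← rpow_def_of_pos two_pos] at h
  nlinarith [log_two_lt_d9, log_pos one_lt_two]

theorem one_sub_two_rpow_neg_div_le_exp_neg_one {ω : ℝ} (hω : 0 < ω) :
    (1 - 2 ^ (-ω)) / (exp 1 * ω) ≤ exp (-1) := by
  rw [div_le_iff₀ (by positivity), exp_neg, ← mul_assoc, inv_mul_cancel₀ (exp_pos 1).ne',
    one_mul]
  exact one_sub_two_rpow_neg_le hω.le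

theorem one_add_Gamma_le {ω : ℝ} (hω0 : 0 < ω) (hω2 : ω ≤ 2) :
    1 + Gamma ω ≤ 2 / ((1 - 1 / exp 1) ^ 2 * ω) := by
  have he0 : 0 < 1 - 1 / exp 1 := by
    rw [sub_pos, div_lt_one (exp_pos 1)]; linarith [exp_one_gt_two]
  have he : 1 - 1 / exp 1 ≤ 2 / 3 := by
    rw [sub_le_comm, le_div_iff₀ (exp_pos 1)]; linarith [exp_one_lt_three]
  calc 1 + Gamma ω ≤ 1 + 2 / ω := by gcongr; exact Gamma_le_two_div hω0 hω2
    _ ≤ 2 / (1 / 2 * ω) := by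
        rw [add_div' _ _ _ hω0.ne', div_le_div_iff₀ hω0 (by positivity)]; nlinarith
    _ ≤ 2 / ((1 - 1 / exp 1) ^ 2 * ω) := by gcongr; nlinarith

section

variable {ξ t p : ℝ}

theorem rpow_add_le_one_add_rpow_mul_one_add_rpow_of_nonneg (hξ : 0 ≤ ξ) (ht : 0 ≤ t)
    (hp0 : 0 ≤ p) (hp1 : p ≤ 1) :
    (ξ + t) ^ p ≤ (1 + ξ) ^ p * (1 + t ^ p) :=
  calc (ξ + t) ^ p ≤ ((1 + ξ) * (1 + t)) ^ p := by gcongr; nlinarith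
    _ = (1 + ξ) ^ p * (1 + t) ^ p := mul_rpow (by positivity) (by positivity)
    _ ≤ (1 + ξ) ^ p * (1 + t ^ p) := by
      gcongr
      simpa using rpow_add_le_add_rpow zero_le_one ht hp0 hp1

theorem rpow_add_le_one_add_rpow_mul_one_add_rpow_of_nonpos (hξ : 0 ≤ ξ) (ht : 0 < t)
    (hp0 : -1 ≤ p) (hp1 : p ≤ 0) :
    (ξ + t) ^ p ≤ (1 + ξ) ^ p * (1 + t ^ p) :=
  calc (ξ + t) ^ p ≤ ((1 + ξ) * (t / (1 + t))) ^ p := by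
        apply rpow_le_rpow_of_nonpos (by positivity) _ hp1
        rw [← mul_div_assoc, div_le_iff₀ (by positivity)]
        nlinarith
    _ = (1 + ξ) ^ p * (1 + t⁻¹) ^ (-p) := by
        rw [mul_rpow (by positivity) (by positivity), rpow_neg (by positivity),
          ← inv_rpow (by positivity)]
        congr 2
        field_simp
        ring
    _ ≤ (1 + ξ) ^ p * (1 + t ^ p) := by
        gcongr
        calc (1 + t⁻¹) ^ (-p) ≤ 1 ^ (-p) + t⁻¹ ^ (-p) :=
              rpow_add_le_add_rpow zero_le_one (by positivity) (by linarith) (by linarith)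
          _ = 1 + t ^ p := by rw [one_rpow, inv_rpow ht.le, ← rpow_neg ht.le, neg_neg]

theorem rpow_add_le_one_add_rpow_mul_one_add_rpow (hξ : 0 ≤ ξ) (ht : 0 < t) (hp0 : -1 ≤ p)
    (hp1 : p ≤ 1) :
    (ξ + t) ^ p ≤ (1 + ξ) ^ p * (1 + t ^ p) := by
  rcases le_total 0 p with hp | hp
  · exact rpow_add_le_one_add_rpow_mul_one_add_rpow_of_nonneg hξ ht.le hp hp1
  · exact rpow_add_le_one_add_rpow_mul_one_add_rpow_of_nonpos hξ ht hp0 hp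

theorem integrableOn_Ioi_rpow_mul_exp_neg (hp : -1 < p) :
    IntegrableOn (fun t => t ^ p * exp (-t)) (Ioi 0) := by
  simpa [mul_comm] using GammaIntegral_convergent (s := p + 1) (by linarith)

theorem integrableOn_Ioi_one_add_rpow_mul_exp_neg (hp : -1 < p) :
    IntegrableOn (fun t => (1 + t ^ p) * exp (-t)) (Ioi 0) := by
  simp_rw [add_mul, one_mul]
  exact (integrableOn_exp_neg_Ioi 0).add (integrableOn_Ioi_rpow_mul_exp_neg hp)

theorem integral_Ioi_one_add_rpow_mul_exp_neg (hp : -1 < p) :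
    ∫ t in Ioi 0, (1 + t ^ p) * exp (-t) = 1 + Gamma (p + 1) := by
  simp_rw [add_mul, one_mul]
  rw [integral_add (integrableOn_exp_neg_Ioi 0) (integrableOn_Ioi_rpow_mul_exp_neg hp),
    integral_exp_neg_Ioi_zero, Gamma_eq_integral (by linarith)]
  simp [mul_comm]

theorem integrableOn_Ioi_rpow_add_mul_exp_neg (hξ : 0 ≤ ξ) (hp0 : -1 < p) (hp1 : p ≤ 1) :
    IntegrableOn (fun t => (ξ + t) ^ p * exp (-t)) (Ioi 0) := by
  refine ((integrableOn_Ioi_one_add_rpow_mul_exp_neg hp0).const_mul ((1 + ξ) ^ p)).mono'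
    (by fun_prop) ?_
  filter_upwards [ae_restrict_mem measurableSet_Ioi] with t (ht : 0 < t)
  rw [norm_of_nonneg (by positivity), ← mul_assoc]
  gcongr
  exact rpow_add_le_one_add_rpow_mul_one_add_rpow hξ ht hp0.le hp1

theorem integral_Ioi_rpow_add_mul_exp_neg_le (hξ : 0 ≤ ξ) (hp0 : -1 < p) (hp1 : p ≤ 1) :
    ∫ t in Ioi 0, (ξ + t) ^ p * exp (-t) ≤ (1 + ξ) ^ p * (1 + Gamma (p + 1)) := by
  rw [← integral_Ioi_one_add_rpow_mul_exp_neg hp0, ← integral_const_mul]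
  refine integral_mono_of_nonneg ?_
    ((integrableOn_Ioi_one_add_rpow_mul_exp_neg hp0).const_mul _) ?_
  · filter_upwards [ae_restrict_mem measurableSet_Ioi] with t (ht : 0 < t)
    positivity
  · filter_upwards [ae_restrict_mem measurableSet_Ioi] with t (ht : 0 < t)
    rw [← mul_assoc]
    gcongr
    exact rpow_add_le_one_add_rpow_mul_one_add_rpow hξ ht hp0.le hp1

theorem mul_setIntegral_exp_neg_le_integral_Ioi_rpow_add_mul_exp_neg (hξ : 0 ≤ ξ)
    (hp0 : -1 < p) (hp1 : p ≤ 1) {s : Set ℝ} (hs : MeasurableSet s) (hs0 : s ⊆ Ioi 0)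
    (hle : ∀ t ∈ s, (1 + ξ) ^ p ≤ (ξ + t) ^ p) :
    (1 + ξ) ^ p * ∫ t in s, exp (-t) ≤ ∫ t in Ioi 0, (ξ + t) ^ p * exp (-t) := by
  have hint := integrableOn_Ioi_rpow_add_mul_exp_neg hξ hp0 hp1
  calc (1 + ξ) ^ p * ∫ t in s, exp (-t) = ∫ t in s, (1 + ξ) ^ p * exp (-t) :=
        (integral_const_mul _ _).symm
    _ ≤ ∫ t in s, (ξ + t) ^ p * exp (-t) :=
        setIntegral_mono_on (((integrableOn_exp_neg_Ioi 0).mono_set hs0).const_mul _)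
          (hint.mono_set hs0) hs fun t ht =>
            mul_le_mul_of_nonneg_right (hle t ht) (exp_pos _).le
    _ ≤ ∫ t in Ioi 0, (ξ + t) ^ p * exp (-t) := by
        refine setIntegral_mono_set hint ?_ hs0.eventuallyLE
        filter_upwards [ae_restrict_mem measurableSet_Ioi] with t (ht : 0 < t)
        positivity

theorem rpow_mul_exp_neg_one_le_integral_Ioi_rpow_add_mul_exp_neg (hξ : 0 ≤ ξ) (hp0 : -1 < p)
    (hp1 : p ≤ 1) :
    (1 + ξ) ^ p * exp (-1) ≤ ∫ t in Ioi 0, (ξ + t) ^ p * exp (-t) := by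
  rcases le_total 0 p with hp | hp
  · rw [← integral_exp_neg_Ioi 1]
    refine mul_setIntegral_exp_neg_le_integral_Ioi_rpow_add_mul_exp_neg hξ hp0 hp1
      measurableSet_Ioi (Ioi_subset_Ioi zero_le_one) fun t (ht : 1 < t) => ?_
    exact rpow_le_rpow (by positivity) (by linarith) hp
  · calc (1 + ξ) ^ p * exp (-1) ≤ (1 + ξ) ^ p * ∫ t in Ioc 0 1, exp (-t) := by
          gcongr
          rw [integral_Ioc_exp_neg zero_le_one, neg_zero, exp_zero]
          linarith [exp_neg_one_lt_half]
      _ ≤ _ := mul_setIntegral_exp_neg_le_integral_Ioi_rpow_add_mul_exp_neg hξ hp0 hp1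
          measurableSet_Ioc Ioc_subset_Ioi_self fun t ⟨ht0, ht1⟩ =>
            rpow_le_rpow_of_nonpos (by positivity) (by linarith) hp

end

theorem upper_incomplete_gamma_bounds (ω : ℝ) (hω : ω ∈ Set.Icc (1/2 : ℝ) 2)
    (ξ : ℝ) (hξ : 0 ≤ ξ) :
    (1 - 2 ^ (-ω)) / (Real.exp 1 * ω) * (1 + ξ) ^ (ω - 1) * Real.exp (-ξ) ≤
      ∫ u in Set.Ioi ξ, u ^ (ω - 1) * Real.exp (-u) ∧
    (∫ u in Set.Ioi ξ, u ^ (ω - 1) * Real.exp (-u)) ≤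
      2 / ((1 - 1 / Real.exp 1) ^ 2 * ω) * (1 + ξ) ^ (ω - 1) * Real.exp (-ξ) := by
  obtain ⟨hω1, hω2⟩ := hω
  have hω0 : 0 < ω := by linarith
  have hp0 : -1 < ω - 1 := by linarith
  have hp1 : ω - 1 ≤ 1 := by linarith
  set P := (1 + ξ) ^ (ω - 1)
  rw [integral_Ioi_rpow_mul_exp_neg_eq]
  constructor
  · calc (1 - 2 ^ (-ω)) / (exp 1 * ω) * P * exp (-ξ) ≤ exp (-1) * P * exp (-ξ) := by
          gcongr; exact one_sub_two_rpow_neg_div_le_exp_neg_one hω0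
      _ = exp (-ξ) * (P * exp (-1)) := by ring
      _ ≤ _ := by
          gcongr; exact rpow_mul_exp_neg_one_le_integral_Ioi_rpow_add_mul_exp_neg hξ hp0 hp1
  · calc exp (-ξ) * ∫ t in Ioi 0, (ξ + t) ^ (ω - 1) * exp (-t)
        ≤ exp (-ξ) * (P * (1 + Gamma ω)) := by
          gcongr
          simpa using integral_Ioi_rpow_add_mul_exp_neg_le hξ hp0 hp1
      _ = (1 + Gamma ω) * P * exp (-ξ) := by ring
      _ ≤ _ := by gcongr; exact one_add_Gamma_le hω0 hω2
end

section
/- Let the functions h_j be defined recursively by h_1(φ) = φ and h_{j+1}(φ) = h_j'(φ)·sin(φ) − (2j−1)·h_j(φ)·cos(φ) for j ≥ 1. Then for every j ≥ 1, h_j is non-negative and monotone increasing on [0,π], and moreover h_{j+1}'(φ) = j²·h_j(φ)·sin(φ) for all φ ∈ [0,π]. -/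
open Real

/-- The sequence of functions `h_j` defined by `h_1(φ) = φ` and
`h_{j+1}(φ) = h_j'(φ)·sin φ − (2j−1)·h_j(φ)·cos φ` for `j ≥ 1` (with `h_0 := 0` as a dummy). -/
noncomputable def hseq : ℕ → ℝ → ℝ
  | 0 => fun _ => 0
  | 1 => fun φ => φ
  | (j + 2) => fun φ =>
      deriv (hseq (j + 1)) φ * Real.sin φ - (2 * (j : ℝ) + 1) * hseq (j + 1) φ * Real.cos φ

/-!
The identity `h_{j+1}' = j² h_j sin` goes by induction: substitute it into the recurrence for
`h_{j+2}`, differentiate, and eliminate `h_j'` with the recurrence for `h_{j+1}`. Since `sin ≥ 0`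
on `[0, π]`, nonnegativity of `h_j` there makes `h_{j+1}` increasing, and as every `h_j` vanishes
at `0`, `h_{j+1}` is nonnegative in turn.
-/

open scoped ContDiff

theorem hseq_add_two (j : ℕ) (φ : ℝ) :
    hseq (j + 2) φ = deriv (hseq (j + 1)) φ * sin φ - (2 * (j : ℝ) + 1) * hseq (j + 1) φ * cos φ :=
  rfl

theorem hseq_succ (j : ℕ) (hj : 1 ≤ j) (φ : ℝ) :
    hseq (j + 1) φ = deriv (hseq j) φ * sin φ - (2 * (j : ℝ) - 1) * hseq j φ * cos φ := by
  obtain ⟨k, rfl⟩ := Nat.exists_eq_add_of_le' hj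
  rw [hseq_add_two]
  push_cast
  ring

theorem contDiff_hseq : ∀ j, ContDiff ℝ ∞ (hseq j)
  | 0 => contDiff_const
  | 1 => contDiff_id
  | j + 2 => by
    have h := contDiff_hseq (j + 1)
    rw [show hseq (j + 2) = _ from funext (hseq_add_two j)]
    exact ((contDiff_infty_iff_deriv.1 h).2.mul contDiff_sin).sub
      ((contDiff_const.mul h).mul contDiff_cos)

theorem hseq_apply_zero : ∀ j, hseq j 0 = 0
  | 0 => rfl
  | 1 => rfl
  | j + 2 => by rw [hseq_add_two, hseq_apply_zero (j + 1), sin_zero]; ring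

theorem hasDerivAt_hseq_succ (j : ℕ) (hj : 1 ≤ j) (φ : ℝ) :
    HasDerivAt (hseq (j + 1)) ((j : ℝ) ^ 2 * hseq j φ * sin φ) φ := by
  induction j, hj using Nat.le_induction generalizing φ with
  | base =>
    have h_two : hseq 2 = fun x => sin x - x * cos x := by
      funext x
      rw [hseq_add_two, show hseq 1 = id from rfl, deriv_id]
      simp
    rw [h_two]
    refine ((hasDerivAt_sin φ).sub ((hasDerivAt_id φ).mul (hasDerivAt_cos φ))).congr_deriv ?_
    change _ = ((1 : ℕ) : ℝ) ^ 2 * φ * sin φ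
    simp only [id, Nat.cast_one]
    ring
  | succ n hn ih =>
    have h_eq : hseq (n + 2) = fun x =>
        (n : ℝ) ^ 2 * hseq n x * sin x * sin x - (2 * n + 1) * hseq (n + 1) x * cos x :=
      funext fun x => by rw [hseq_add_two, (ih x).deriv]
    have hn' := ((contDiff_hseq n).differentiable (by simp) φ).hasDerivAt
    show HasDerivAt (hseq (n + 2)) _ φ
    rw [h_eq]
    refine ((((hn'.const_mul _).mul (hasDerivAt_sin φ)).mul (hasDerivAt_sin φ)).sub
      (((ih φ).const_mul _).mul (hasDerivAt_cos φ))).congr_deriv ?_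
    rw [hseq_succ n hn]
    simp only [Pi.mul_apply]
    push_cast
    ring

theorem monotoneOn_hseq_succ (j : ℕ) (hj : 1 ≤ j)
    (h_nonneg : ∀ φ ∈ Set.Icc 0 π, 0 ≤ hseq j φ) : MonotoneOn (hseq (j + 1)) (Set.Icc 0 π) := by
  refine monotoneOn_of_hasDerivWithinAt_nonneg (convex_Icc 0 π)
    (contDiff_hseq (j + 1)).continuous.continuousOn
    (fun x _ => (hasDerivAt_hseq_succ j hj x).hasDerivWithinAt) fun x hx => ?_
  rw [interior_Icc] at hx
  exact mul_nonneg (mul_nonneg (sq_nonneg _) (h_nonneg x (Set.Ioo_subset_Icc_self hx)))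
    (sin_nonneg_of_nonneg_of_le_pi hx.1.le hx.2.le)

theorem hseq_nonneg_and_monotoneOn (j : ℕ) (hj : 1 ≤ j) :
    (∀ φ ∈ Set.Icc 0 π, 0 ≤ hseq j φ) ∧ MonotoneOn (hseq j) (Set.Icc 0 π) := by
  induction j, hj using Nat.le_induction with
  | base => exact ⟨fun φ hφ => hφ.1, monotone_id.monotoneOn _⟩
  | succ n hn ih =>
    have h_mono := monotoneOn_hseq_succ n hn ih.1
    refine ⟨fun φ hφ => ?_, h_mono⟩
    simpa [hseq_apply_zero] using h_mono (Set.left_mem_Icc.2 pi_pos.le) hφ hφ.1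

theorem hseq_props (j : ℕ) (hj : 1 ≤ j) :
    (∀ φ ∈ Set.Icc (0 : ℝ) π, 0 ≤ hseq j φ) ∧
    MonotoneOn (hseq j) (Set.Icc (0 : ℝ) π) ∧
    (∀ φ ∈ Set.Icc (0 : ℝ) π,
      deriv (hseq (j + 1)) φ = (j : ℝ) ^ 2 * hseq j φ * Real.sin φ) :=
  ⟨(hseq_nonneg_and_monotoneOn j hj).1, (hseq_nonneg_and_monotoneOn j hj).2,
    fun φ _ => (hasDerivAt_hseq_succ j hj φ).deriv⟩
end

section
/- Define h_j recursively by h_1(φ) = φ and h_{j+1}(φ) = h_j'(φ)·sin(φ) − (2j−1)·h_j(φ)·cos(φ) for j ≥ 1, and set w_j(φ) := h_j(φ)·(π−φ)^{j−1}/(j!·φ^j·(sin φ)^{j−1}) for φ ∈ (0,π). Then for every j ≥ 1 and every φ ∈ (0, π/2], w_j(φ) ≤ π^{j−1}. -/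
open Real

/-- The functions `w_j(φ) = h_j(φ)·(π−φ)^{j−1}/(j!·φ^j·(sin φ)^{j−1})`. -/
noncomputable def wseq (j : ℕ) (φ : ℝ) : ℝ :=
  hseq j φ * (π - φ) ^ (j - 1) / ((Nat.factorial j : ℝ) * φ ^ j * Real.sin φ ^ (j - 1))


/-! For `0 < φ < π` one has `h_{k+1}(φ) = 2 k! sin^{2k+1} φ · I_k(φ)` with
`I_k(φ) = ∫₀¹ (2s)^k / (1 + 2s cos φ + s²)^{k+1} ds`: differentiating the integrand in `φ`
raises `k` by one and produces a factor `(k+1) sin φ`, which is exactly what the recursion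
for `h` needs. Hence `w_{k+1}(φ) = 2/(k+1) · (sin φ / φ)^{k+1} · (π - φ)^k · I_k(φ)`, and when
`cos φ ≥ 0` the integrand is at most `1/(1 + s²)`, so `I_k(φ) ≤ π/4`. -/

open intervalIntegral MeasureTheory Topology Set Filter

noncomputable def cosQuad (φ s : ℝ) : ℝ := 1 + 2 * s * cos φ + s ^ 2

lemma cosQuad_eq (φ s : ℝ) : cosQuad φ s = (s + cos φ) ^ 2 + sin φ ^ 2 := by
  rw [cosQuad]; linear_combination (-1 : ℝ) * sin_sq_add_cos_sq φ

lemma sin_sq_le_cosQuad (φ s : ℝ) : sin φ ^ 2 ≤ cosQuad φ s := by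
  rw [cosQuad_eq]; nlinarith [sq_nonneg (s + cos φ)]

lemma cosQuad_pos {φ : ℝ} (h : sin φ ≠ 0) (s : ℝ) : 0 < cosQuad φ s :=
  (pow_pos (abs_pos.mpr h) 2).trans_le (by simpa using sin_sq_le_cosQuad φ s)

lemma hasDerivAt_cosQuad (φ s : ℝ) :
    HasDerivAt (fun φ => cosQuad φ s) (-(2 * s * sin φ)) φ := by
  unfold cosQuad
  simpa using (((hasDerivAt_cos φ).const_mul (2 * s)).const_add 1).add_const (s ^ 2)

noncomputable def hKernel (k : ℕ) (φ s : ℝ) : ℝ := (2 * s) ^ k / cosQuad φ s ^ (k + 1)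

noncomputable def hIntegral (k : ℕ) (φ : ℝ) : ℝ := ∫ s in (0 : ℝ)..1, hKernel k φ s

lemma continuous_hKernel (k : ℕ) {φ : ℝ} (h : sin φ ≠ 0) : Continuous (hKernel k φ) :=
  Continuous.div (by fun_prop) (by unfold cosQuad; fun_prop) fun s ↦
    (pow_pos (cosQuad_pos h s) _).ne'

lemma hasDerivAt_hKernel (k : ℕ) {φ : ℝ} (h : sin φ ≠ 0) (s : ℝ) :
    HasDerivAt (fun φ => hKernel k φ s) ((k + 1) * sin φ * hKernel (k + 1) φ s) φ := by
  have hQ := cosQuad_pos h s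
  refine ((hasDerivAt_const φ ((2 * s) ^ k)).div ((hasDerivAt_cosQuad φ s).fun_pow (k + 1))
    (pow_pos hQ _).ne').congr_deriv ?_
  simp only [hKernel]
  field_simp
  push_cast
  ring

lemma abs_hKernel_le {k : ℕ} {φ s c : ℝ} (hs : s ∈ Icc (0 : ℝ) 1) (hc : 0 < c)
    (hcφ : c ≤ |sin φ|) : |hKernel k φ s| ≤ 2 ^ k / (c ^ 2) ^ (k + 1) := by
  have hQ : c ^ 2 ≤ cosQuad φ s :=
    (pow_le_pow_left₀ hc.le hcφ 2).trans (by simpa using sin_sq_le_cosQuad φ s)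
  rw [hKernel, abs_div, abs_pow, abs_pow, abs_of_nonneg (by linarith [hs.1]),
    abs_of_pos ((pow_pos hc 2).trans_le hQ)]
  gcongr
  · linarith [hs.1]
  · linarith [hs.2]

lemma hasDerivAt_hIntegral (k : ℕ) {φ : ℝ} (hφ : sin φ ≠ 0) :
    HasDerivAt (hIntegral k) ((k + 1) * sin φ * hIntegral (k + 1) φ) φ := by
  set c := |sin φ| / 2
  have hc : 0 < c := by positivity
  set U := {x | c < |sin x|}
  have hU : U ∈ 𝓝 φ :=
    (isOpen_lt continuous_const continuous_sin.abs).mem_nhds (by simp [c, abs_pos.mpr hφ])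
  have hsinU {x} (hx : x ∈ U) : sin x ≠ 0 := abs_pos.mp (hc.trans hx)
  have hIoc {t : ℝ} (ht : t ∈ uIoc (0 : ℝ) 1) : t ∈ Icc (0 : ℝ) 1 := by
    rw [uIoc_of_le zero_le_one] at ht
    exact Ioc_subset_Icc_self ht
  have key := hasDerivAt_integral_of_dominated_loc_of_deriv_le (a := 0) (b := 1) (μ := volume)
    (F := hKernel k) (F' := fun x t => (k + 1) * sin x * hKernel (k + 1) x t)
    (bound := fun _ => (k + 1) * (2 ^ (k + 1) / (c ^ 2) ^ (k + 2))) hU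
    (eventually_of_mem hU fun x hx =>
      (continuous_hKernel k (hsinU hx)).aestronglyMeasurable)
    ((continuous_hKernel k hφ).intervalIntegrable 0 1)
    ((continuous_hKernel (k + 1) hφ).const_mul _).aestronglyMeasurable
    (Eventually.of_forall fun t ht x hx => by
      rw [Real.norm_eq_abs, abs_mul, abs_mul, abs_of_nonneg (by positivity : (0 : ℝ) ≤ k + 1),
        mul_assoc]
      gcongr
      exact (mul_le_of_le_one_left (abs_nonneg _) (abs_sin_le_one x)).trans
        (abs_hKernel_le (hIoc ht) hc hx.le))
    intervalIntegrable_const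
    (Eventually.of_forall fun t _ x hx => hasDerivAt_hKernel k (hsinU hx) t)
  rw [intervalIntegral.integral_const_mul] at key
  exact key.2

lemma arctan_cos_div_sin {φ : ℝ} (h₀ : 0 < φ) (hπ : φ < π) :
    arctan (cos φ / sin φ) = π / 2 - φ := by
  rw [show cos φ / sin φ = tan (π / 2 - φ) by
    rw [tan_eq_sin_div_cos, sin_pi_div_two_sub, cos_pi_div_two_sub],
    arctan_tan (by linarith) (by linarith)]

lemma one_add_cos_two_mul_div_sin_two_mul (ψ : ℝ) :
    (1 + cos (2 * ψ)) / sin (2 * ψ) = cos ψ / sin ψ := by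
  rw [cos_two_mul, sin_two_mul]
  rcases eq_or_ne (cos ψ) 0 with h | h
  · simp [h]
  · rw [show 1 + (2 * cos ψ ^ 2 - 1) = cos ψ * (2 * cos ψ) by ring,
      show 2 * sin ψ * cos ψ = sin ψ * (2 * cos ψ) by ring,
      mul_div_mul_right _ _ (by simpa using h)]

lemma hasDerivAt_arctan_div_sin {φ : ℝ} (h : sin φ ≠ 0) (s : ℝ) :
    HasDerivAt (fun s => arctan ((s + cos φ) / sin φ) / sin φ) (hKernel 0 φ s) s := by
  have hlin : HasDerivAt (fun s => (s + cos φ) / sin φ) (1 / sin φ) s := by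
    simpa using ((hasDerivAt_id s).add_const (cos φ)).div_const (sin φ)
  refine ((hasDerivAt_arctan _).comp s hlin).div_const (sin φ) |>.congr_deriv ?_
  rw [hKernel, cosQuad_eq]
  field_simp
  ring

lemma hIntegral_zero {φ : ℝ} (h₀ : 0 < φ) (hπ : φ < π) :
    hIntegral 0 φ = φ / (2 * sin φ) := by
  have hsin := (sin_pos_of_pos_of_lt_pi h₀ hπ).ne'
  rw [hIntegral, integral_eq_sub_of_hasDerivAt (fun s _ => hasDerivAt_arctan_div_sin hsin s)
    ((continuous_hKernel 0 hsin).intervalIntegrable 0 1)]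
  obtain ⟨ψ, rfl⟩ : ∃ ψ, φ = 2 * ψ := ⟨φ / 2, by ring⟩
  rw [zero_add, one_add_cos_two_mul_div_sin_two_mul,
    arctan_cos_div_sin (by linarith) (by linarith), arctan_cos_div_sin h₀ hπ]
  field_simp
  ring

lemma hseq_succ_eq (k : ℕ) {φ : ℝ} (hφ : φ ∈ Ioo 0 π) :
    hseq (k + 1) φ = 2 * k.factorial * sin φ ^ (2 * k + 1) * hIntegral k φ := by
  induction k generalizing φ with
  | zero =>
    show φ = _
    rw [hIntegral_zero hφ.1 hφ.2]
    field_simp [(sin_pos_of_pos_of_lt_pi hφ.1 hφ.2).ne']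
    simp
  | succ k ih =>
    have hsin := (sin_pos_of_pos_of_lt_pi hφ.1 hφ.2).ne'
    have hrep : hseq (k + 1) =ᶠ[𝓝 φ]
        fun x => 2 * k.factorial * (sin x ^ (2 * k + 1) * hIntegral k x) :=
      eventually_of_mem (Ioo_mem_nhds hφ.1 hφ.2) fun x hx => by rw [ih hx]; ring
    have hderiv : HasDerivAt (hseq (k + 1)) (2 * k.factorial *
        ((2 * k + 1 : ℕ) * sin φ ^ (2 * k) * cos φ * hIntegral k φ +
          sin φ ^ (2 * k + 1) * ((k + 1) * sin φ * hIntegral (k + 1) φ))) φ :=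
      ((((hasDerivAt_sin φ).pow (2 * k + 1)).mul
        (hasDerivAt_hIntegral k hsin)).const_mul _).congr_of_eventuallyEq hrep
    rw [hseq]
    beta_reduce
    rw [hderiv.deriv, ih hφ, Nat.factorial_succ]
    push_cast
    ring

lemma hKernel_le_inv_one_add_sq (k : ℕ) {φ s : ℝ} (hcos : 0 ≤ cos φ) (hs : 0 ≤ s) :
    hKernel k φ s ≤ (1 + s ^ 2)⁻¹ := by
  have hQ : 1 + s ^ 2 ≤ cosQuad φ s := by
    rw [cosQuad]; nlinarith [mul_nonneg hs hcos]
  calc hKernel k φ s ≤ (1 + s ^ 2) ^ k / (1 + s ^ 2) ^ (k + 1) := by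
        rw [hKernel]
        gcongr
        · nlinarith [sq_nonneg (s - 1)]
    _ = (1 + s ^ 2)⁻¹ := by
        rw [pow_succ (1 + s ^ 2) k, div_mul_cancel_left₀ (by positivity)]

lemma hIntegral_nonneg (k : ℕ) {φ : ℝ} (hsin : sin φ ≠ 0) : 0 ≤ hIntegral k φ :=
  integral_nonneg zero_le_one fun s hs =>
    div_nonneg (pow_nonneg (by linarith [hs.1]) k) (pow_pos (cosQuad_pos hsin s) _).le

lemma hIntegral_le_pi_div_four (k : ℕ) {φ : ℝ} (hsin : sin φ ≠ 0) (hcos : 0 ≤ cos φ) :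
    hIntegral k φ ≤ π / 4 := by
  calc hIntegral k φ ≤ ∫ s in (0 : ℝ)..1, (1 + s ^ 2)⁻¹ :=
        integral_mono_on zero_le_one ((continuous_hKernel k hsin).intervalIntegrable 0 1)
          (by apply Continuous.intervalIntegrable; fun_prop (disch := intro x; positivity))
          fun s hs => hKernel_le_inv_one_add_sq k hcos hs.1
    _ = π / 4 := by simp

lemma wseq_succ_eq (k : ℕ) {φ : ℝ} (hφ : φ ∈ Ioo 0 π) :
    wseq (k + 1) φ = 2 / (k + 1) * (sin φ / φ) ^ (k + 1) * (π - φ) ^ k * hIntegral k φ := by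
  have hsin := (sin_pos_of_pos_of_lt_pi hφ.1 hφ.2).ne'
  rw [wseq, hseq_succ_eq k hφ, Nat.add_sub_cancel, Nat.factorial_succ, div_pow]
  field_simp
  push_cast
  ring

theorem wseq_bound (j : ℕ) (hj : 1 ≤ j) (φ : ℝ) (hφ : φ ∈ Set.Ioc (0 : ℝ) (π/2)) :
    wseq j φ ≤ π ^ (j - 1) := by
  obtain ⟨h₀, hle⟩ := hφ
  obtain ⟨k, rfl⟩ := Nat.exists_eq_add_of_le' hj
  rcases k.eq_zero_or_pos with rfl | hk
  · simp [wseq, hseq, h₀.ne']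
  have hφπ : φ ∈ Ioo 0 π := ⟨h₀, by linarith [pi_pos]⟩
  have hsin := sin_pos_of_pos_of_lt_pi hφπ.1 hφπ.2
  have hcos : 0 ≤ cos φ := cos_nonneg_of_mem_Icc ⟨by linarith [pi_pos], hle⟩
  have hI := hIntegral_le_pi_div_four k hsin.ne' hcos
  have hI₀ := hIntegral_nonneg k hsin.ne'
  have hratio : sin φ / φ ≤ 1 := (div_le_one h₀).mpr (sin_le h₀.le)
  have hk' : (1 : ℝ) ≤ k := by exact_mod_cast hk
  have hπφ : 0 ≤ π - φ := by linarith [hφπ.2]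
  rw [wseq_succ_eq k hφπ, Nat.add_sub_cancel]
  calc 2 / (k + 1) * (sin φ / φ) ^ (k + 1) * (π - φ) ^ k * hIntegral k φ
      ≤ 2 / (k + 1) * 1 ^ (k + 1) * π ^ k * (π / 4) := by
        gcongr
        linarith
    _ = π ^ k * (π / 4 * (2 / (k + 1))) := by ring
    _ ≤ π ^ k := by
        refine mul_le_of_le_one_right (by positivity) (mul_le_one₀ ?_ (by positivity) ?_)
        · linarith [pi_le_four]
        · rw [div_le_one (by positivity)]
          linarith
end

section
/- Let N ≥ 1 be an integer and let s > 0 be a real number. Then Σ_{(k_1,…,k_N)} [N!/(k_1!·k_2!·⋯·k_N!)]·s^{k_1+k_2+⋯+k_N} = Σ_{n=1}^N binom(N,n)·[(N−1)!/(n−1)!]·s^n, where the sum on the left runs over all tuples (k_1,…,k_N) of non-negative integers satisfying k_1 + 2k_2 + ⋯ + N·k_N = N. -/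
open Finset Polynomial

lemma card_piAntidiag_fin (n m : ℕ) :
    ((Finset.piAntidiag (Finset.univ : Finset (Fin n)) m)).card = (n + m - 1).choose m := by
  rw [← Finset.map_sym_eq_piAntidiag, Finset.card_map]
  have h : (Finset.univ : Finset (Fin n)).sym m = Finset.univ := by
    ext x; simp [Finset.mem_sym_iff]
  rw [h, Finset.card_univ, Sym.card_sym_eq_choose, Fintype.card_fin]

lemma card_compositions (N n : ℕ) (hn : 1 ≤ n) (hNn : n ≤ N) :
    (((Fintype.piFinset fun _ : Fin n => (Finset.univ : Finset (Fin N)))).filter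
      (fun g => ∑ j : Fin n, ((g j).1 + 1) = N)).card = (N - 1).choose (n - 1) := by
  have key : (((Fintype.piFinset fun _ : Fin n => (Finset.univ : Finset (Fin N)))).filter
      (fun g => ∑ j : Fin n, ((g j).1 + 1) = N)).card
      = (Finset.piAntidiag (Finset.univ : Finset (Fin n)) (N - n)).card := by
    apply Finset.card_bij (fun g _ => fun j => (g j).1)
    · intro g hg
      simp only [Finset.mem_filter] at hg
      simp only [Finset.mem_piAntidiag]
      refine ⟨?_, by simp⟩
      have := hg.2
      rw [Finset.sum_add_distrib, Finset.sum_const, Finset.card_univ, Fintype.card_fin,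
        smul_eq_mul, mul_one] at this
      omega
    · intro g hg g' hg' h
      funext j
      exact Fin.val_injective (congrFun h j)
    · intro f hf
      simp only [Finset.mem_piAntidiag] at hf
      obtain ⟨hf1, hf2⟩ := hf
      have hfs : ∑ i : Fin n, f i = N - n := hf1
      have hlt : ∀ j, f j < N := by
        intro j
        have : f j ≤ ∑ i : Fin n, f i := Finset.single_le_sum (fun _ _ => Nat.zero_le _) (mem_univ j)
        omega
      refine ⟨fun j => ⟨f j, hlt j⟩, ?_, rfl⟩
      simp only [Finset.mem_filter]
      refine ⟨by simp, ?_⟩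
      rw [Finset.sum_add_distrib, Finset.sum_const, Finset.card_univ, Fintype.card_fin,
        smul_eq_mul, mul_one]
      omega
  rw [key, card_piAntidiag_fin]
  clear key
  have h1 : n + (N - n) - 1 = N - 1 := by omega
  rw [h1]
  have h3 := Nat.choose_symm (show N - n ≤ N - 1 by omega)
  have h2 : N - 1 - (N - n) = n - 1 := by omega
  rw [h2] at h3
  exact h3.symm

lemma coeffA (N n : ℕ) :
    ((∑ i : Fin N, (X : Polynomial ℕ) ^ (i.1 + 1)) ^ n).coeff N =
      ∑ k ∈ (Finset.piAntidiag (Finset.univ : Finset (Fin N)) n).filter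
        (fun k => ∑ i : Fin N, (i.1 + 1) * k i = N), Nat.multinomial Finset.univ k := by
  rw [Finset.sum_pow_eq_sum_piAntidiag]
  have h1 : ∀ k : Fin N → ℕ,
      (∏ i : Fin N, ((X : Polynomial ℕ) ^ (i.1 + 1)) ^ k i)
        = X ^ (∑ i : Fin N, (i.1 + 1) * k i) := by
    intro k
    simp_rw [← pow_mul]
    rw [Finset.prod_pow_eq_pow_sum]
  simp_rw [h1]
  rw [Polynomial.finset_sum_coeff]
  rw [Finset.sum_congr rfl (fun k _ => by
    rw [← Polynomial.C_eq_natCast, Polynomial.coeff_C_mul, Polynomial.coeff_X_pow])]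
  simp_rw [mul_ite, mul_one, mul_zero]
  rw [← Finset.sum_filter]
  simp [eq_comm]

lemma coeffB (N n : ℕ) :
    ((∑ i : Fin N, (X : Polynomial ℕ) ^ (i.1 + 1)) ^ n).coeff N =
    (((Fintype.piFinset fun _ : Fin n => (Finset.univ : Finset (Fin N)))).filter
      (fun g => ∑ j : Fin n, ((g j).1 + 1) = N)).card := by
  have h0 : (∑ i : Fin N, (X : Polynomial ℕ) ^ (i.1 + 1)) ^ n
      = ∏ _j : Fin n, (∑ i : Fin N, (X : Polynomial ℕ) ^ (i.1 + 1)) := by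
    rw [Finset.prod_const, Finset.card_univ, Fintype.card_fin]
  rw [h0, Finset.prod_univ_sum]
  simp_rw [Finset.prod_pow_eq_pow_sum]
  rw [Polynomial.finset_sum_coeff]
  simp_rw [Polynomial.coeff_X_pow]
  rw [Finset.sum_boole]
  simp [eq_comm]

lemma core_sum (N n : ℕ) (hn : 1 ≤ n) (hNn : n ≤ N) :
    ∑ k ∈ (Finset.piAntidiag (Finset.univ : Finset (Fin N)) n).filter
        (fun k => ∑ i : Fin N, (i.1 + 1) * k i = N), Nat.multinomial Finset.univ k
      = (N - 1).choose (n - 1) := by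
  rw [← coeffA, coeffB, card_compositions N n hn hNn]

theorem lah_partition_identity (N : ℕ) (hN : 1 ≤ N) (s : ℝ) (hs : 0 < s) :
    (∑ k ∈ Finset.filter (fun k : Fin N → ℕ => ∑ i : Fin N, (i.val + 1) * k i = N)
        (Fintype.piFinset fun _ : Fin N => Finset.range (N + 1)),
      (Nat.factorial N : ℝ) / (∏ i : Fin N, (Nat.factorial (k i) : ℝ)) *
        s ^ (∑ i : Fin N, k i)) =
    ∑ n ∈ Finset.Icc 1 N,
      (Nat.choose N n : ℝ) * ((Nat.factorial (N - 1) : ℝ) / (Nat.factorial (n - 1) : ℝ)) *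
        s ^ n := by
  set S := Finset.filter (fun k : Fin N → ℕ => ∑ i : Fin N, (i.val + 1) * k i = N)
      (Fintype.piFinset fun _ : Fin N => Finset.range (N + 1)) with hS
  have hmap : ∀ k ∈ S, (∑ i : Fin N, k i) ∈ Finset.Icc 1 N := by
    intro k hk
    simp only [hS, Finset.mem_filter] at hk
    obtain ⟨_, hk2⟩ := hk
    have hle : ∑ i : Fin N, k i ≤ ∑ i : Fin N, (i.val + 1) * k i :=
      Finset.sum_le_sum (fun i _ => Nat.le_mul_of_pos_left _ (Nat.succ_pos _))
    have hpos : 1 ≤ ∑ i : Fin N, k i := by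
      by_contra h
      push_neg at h
      interval_cases hsum : (∑ i : Fin N, k i)
      have hzero : ∀ i : Fin N, k i = 0 := by
        intro i
        have := Finset.sum_eq_zero_iff.mp hsum
        exact this i (mem_univ i)
      rw [Finset.sum_congr rfl (fun i _ => by rw [hzero i, mul_zero])] at hk2
      simp at hk2
      omega
    rw [Finset.mem_Icc]
    omega
  rw [← Finset.sum_fiberwise_of_maps_to hmap]
  apply Finset.sum_congr rfl
  intro n hn
  simp only [Finset.mem_Icc] at hn
  obtain ⟨hn1, hn2⟩ := hn
  have hset : S.filter (fun k => ∑ i : Fin N, k i = n)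
      = (Finset.piAntidiag (Finset.univ : Finset (Fin N)) n).filter
        (fun k => ∑ i : Fin N, (i.1 + 1) * k i = N) := by
    ext k
    simp only [hS, Finset.mem_filter, Fintype.mem_piFinset, Finset.mem_range,
      Finset.mem_piAntidiag, Nat.lt_succ_iff, mem_univ, ne_eq]
    constructor
    · rintro ⟨⟨hb, hsum⟩, hn⟩
      exact ⟨⟨hn, fun i _ => trivial⟩, hsum⟩
    · rintro ⟨⟨hn, _⟩, hsum⟩
      refine ⟨⟨?_, hsum⟩, hn⟩
      intro i
      have h1 : (i.val + 1) * k i ≤ ∑ j : Fin N, (j.val + 1) * k j :=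
        Finset.single_le_sum (f := fun j : Fin N => (j.val + 1) * k j)
          (fun _ _ => Nat.zero_le _) (Finset.mem_univ i)
      have h2 : k i ≤ (i.val + 1) * k i := Nat.le_mul_of_pos_left _ (Nat.succ_pos _)
      omega
  rw [hset]
  have hterm : ∀ k ∈ (Finset.piAntidiag (Finset.univ : Finset (Fin N)) n).filter
        (fun k => ∑ i : Fin N, (i.1 + 1) * k i = N),
      (Nat.factorial N : ℝ) / (∏ i : Fin N, (Nat.factorial (k i) : ℝ)) * s ^ (∑ i : Fin N, k i)
        = ((Nat.factorial N : ℝ) / (Nat.factorial n : ℝ))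
          * (Nat.multinomial Finset.univ k : ℝ) * s ^ n := by
    intro k hk
    simp only [Finset.mem_filter, Finset.mem_piAntidiag] at hk
    obtain ⟨⟨hksum, _⟩, _⟩ := hk
    rw [hksum]
    have hspec := Nat.multinomial_spec (Finset.univ : Finset (Fin N)) k
    rw [hksum] at hspec
    have hspecR : (∏ i : Fin N, (Nat.factorial (k i) : ℝ)) * (Nat.multinomial Finset.univ k : ℝ)
        = (Nat.factorial n : ℝ) := by
      push_cast [← hspec]
      ring
    have hP : (∏ i : Fin N, (Nat.factorial (k i) : ℝ)) ≠ 0 := by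
      apply Finset.prod_ne_zero_iff.mpr
      intro i _
      exact_mod_cast (Nat.factorial_pos (k i)).ne'
    have hF : (Nat.factorial n : ℝ) ≠ 0 := by
      exact_mod_cast (Nat.factorial_pos n).ne'
    have key : (Nat.factorial N : ℝ) / (∏ i : Fin N, (Nat.factorial (k i) : ℝ))
        = (Nat.factorial N : ℝ) / (Nat.factorial n : ℝ) * (Nat.multinomial Finset.univ k : ℝ) := by
      rw [div_eq_iff hP, div_mul_eq_mul_div, div_mul_eq_mul_div, eq_div_iff hF, ← hspecR]
      ring
    rw [key]
  rw [Finset.sum_congr rfl hterm]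
  rw [← Finset.sum_mul, ← Finset.mul_sum]
  have hcore : (∑ k ∈ (Finset.piAntidiag (Finset.univ : Finset (Fin N)) n).filter
        (fun k => ∑ i : Fin N, (i.1 + 1) * k i = N), (Nat.multinomial Finset.univ k : ℝ))
      = ((N - 1).choose (n - 1) : ℝ) := by
    rw [← Nat.cast_sum]
    exact_mod_cast congrArg (Nat.cast : ℕ → ℝ) (core_sum N n hn1 hn2)
  rw [hcore]
  -- numeric identity
  have hchoose1 : ((N - 1).choose (n - 1) : ℝ)
      = (Nat.factorial (N - 1) : ℝ) / ((Nat.factorial (n - 1) : ℝ) * (Nat.factorial (N - n) : ℝ)) := by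
    rw [Nat.cast_choose ℝ (by omega : n - 1 ≤ N - 1),
      show N - 1 - (n - 1) = N - n from by omega]
  have hchoose2 : ((N.choose n) : ℝ)
      = (Nat.factorial N : ℝ) / ((Nat.factorial n : ℝ) * (Nat.factorial (N - n) : ℝ)) := by
    rw [Nat.cast_choose ℝ hn2]
  rw [hchoose1, hchoose2]
  have f1 : (Nat.factorial n : ℝ) ≠ 0 := by exact_mod_cast (Nat.factorial_pos n).ne'
  have f2 : (Nat.factorial (n - 1) : ℝ) ≠ 0 := by exact_mod_cast (Nat.factorial_pos (n-1)).ne'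
  have f3 : (Nat.factorial (N - n) : ℝ) ≠ 0 := by exact_mod_cast (Nat.factorial_pos (N-n)).ne'
  field_simp
end
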